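/- Fix a natural number n. For every nonempty admissible sequence I of integers of length s, there is a unique j ∈ {0,…,s} such that e(ω_j I) ≤ n whenever j < s, and i_j > d(ω_j I) + n whenever j > 0. -/

import Mathlib

/-- The excess `e(ω_j I)` of the `j`-fold left truncation of the sequence
`I = (i 1, …, i s)`, using the formula `e(K) = k₁ − Σ_{l ≥ 2} k_l`. -/
def seqExcess (i : ℕ → ℤ) (j s : ℕ) : ℤ :=
  i (j + 1) - ∑ l ∈ Finset.Icc (j + 2) s, i l

/-!
The excesses `e(ω_k I)` decrease with `k`, since `e(ω_k I) - e(ω_{k+1} I) = i_{k+1} - 2 i_{k+2} ≥ 0`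
by admissibility, and `i_j > d(ω_j I) + n` says exactly `e(ω_{j-1} I) > n`. So `j` is forced to be
the first index at which the excess has dropped to at most `n` (or `s` if it never does).
-/

lemma Nat.of_succ_closed_of_le {P : ℕ → Prop} {s : ℕ} (hP : ∀ k, k + 1 < s → P k → P (k + 1))
    {a b : ℕ} (hab : a ≤ b) (hbs : b < s) (ha : P a) : P b := by
  induction b, hab using Nat.le_induction with
  | base => exact ha
  | succ b _ ih => exact hP b hbs (ih (by omega))

lemma existsUnique_threshold {P : ℕ → Prop} {s : ℕ} (hP : ∀ k, k + 1 < s → P k → P (k + 1)) :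
    ∃! j, j ≤ s ∧ (j < s → P j) ∧ (0 < j → ¬ P (j - 1)) := by
  classical
  have hex : ∃ j, j ≤ s ∧ (j < s → P j) := ⟨s, le_rfl, fun h => absurd h (lt_irrefl s)⟩
  obtain ⟨hfind_le, hfind⟩ := Nat.find_spec hex
  refine ⟨Nat.find hex, ⟨hfind_le, hfind, fun hpos hprev => ?_⟩, ?_⟩
  · exact Nat.find_min hex (Nat.sub_one_lt hpos.ne') ⟨(Nat.sub_le _ _).trans hfind_le, fun _ => hprev⟩
  · rintro j ⟨hjs, hj, hjprev⟩
    rcases lt_trichotomy j (Nat.find hex) with hlt | heq | hgt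
    · exact absurd ⟨hjs, hj⟩ (Nat.find_min hex hlt)
    · exact heq
    · exact absurd (Nat.of_succ_closed_of_le hP (Nat.le_sub_one_of_lt hgt) (by omega)
        (hfind (by omega))) (hjprev (by omega))

lemma sum_Icc_eq_add_sum_Icc (i : ℕ → ℤ) {a s : ℕ} (ha : a ≤ s) :
    ∑ l ∈ Finset.Icc a s, i l = i a + ∑ l ∈ Finset.Icc (a + 1) s, i l := by
  rw [Finset.Icc_eq_cons_Ioc ha, Finset.sum_cons, ← Finset.Icc_add_one_left_eq_Ioc]

lemma seqExcess_succ_le {i : ℕ → ℤ} {k s : ℕ} (hk : k + 1 < s) (hadm : 2 * i (k + 2) ≤ i (k + 1)) :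
    seqExcess i (k + 1) s ≤ seqExcess i k s := by
  have hsplit := sum_Icc_eq_add_sum_Icc i (a := k + 2) (s := s) (by omega)
  simp only [seqExcess, hsplit]
  linarith

lemma seqExcess_pred (i : ℕ → ℤ) {j : ℕ} (s : ℕ) (hj : 0 < j) :
    seqExcess i (j - 1) s = i j - ∑ l ∈ Finset.Icc (j + 1) s, i l := by
  obtain ⟨k, rfl⟩ : ∃ k, j = k + 1 := ⟨j - 1, by omega⟩
  rfl

theorem unique_decomposition_miller_general (n : ℕ) (s : ℕ) (i : ℕ → ℤ)
    (hadm : ∀ j, 1 ≤ j → j < s → 2 * i (j + 1) ≤ i j) :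
    ∃! j : ℕ, j ≤ s ∧
      (j < s → seqExcess i j s ≤ n) ∧
      (0 < j → (∑ l ∈ Finset.Icc (j + 1) s, i l) + n < i j) := by
  have hclosed : ∀ k, k + 1 < s → seqExcess i k s ≤ n → seqExcess i (k + 1) s ≤ n :=
    fun k hk h => (seqExcess_succ_le hk (hadm (k + 1) (by omega) hk)).trans h
  refine (existsUnique_congr fun j => ?_).mp (existsUnique_threshold hclosed)
  refine and_congr_right fun _ => and_congr_right fun _ => forall_congr' fun hj => ?_
  rw [not_le, seqExcess_pred i s hj]
  constructor <;> intro h <;> linarith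

theorem unique_decomposition_miller (n : ℕ) (s : ℕ) (hs : 1 ≤ s) (i : ℕ → ℤ)
    (hadm : ∀ j, 1 ≤ j → j < s → 2 * i (j + 1) ≤ i j) :
    ∃! j : ℕ, j ≤ s ∧
      (j < s → seqExcess i j s ≤ n) ∧
      (0 < j → (∑ l ∈ Finset.Icc (j + 1) s, i l) + n < i j) :=
  unique_decomposition_miller_general n s i hadm
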